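/- Let X be a Tychonoff space and A ⊆ X a C-embedded subspace (every continuous real-valued function on A extends continuously to X). Then cl_{υX} A = υA, i.e., the closure of A in the Hewitt realcompactification of X is (equivalent to) the Hewitt realcompactification of A. -/

import Mathlib

def IsRealcompactSpace (Y : Type) [TopologicalSpace Y] : Prop :=
  ∃ (ι : Type) (f : Y → ι → ℝ), Topology.IsClosedEmbedding f

def hewitt (X : Type) [TopologicalSpace X] : Set (StoneCech X) :=
  ⋂₀ {C : Set (StoneCech X) |
      (∃ f : StoneCech X → ℝ, Continuous f ∧ C = {x | f x ≠ 0}) ∧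
        Set.range (stoneCechUnit : X → StoneCech X) ⊆ C}

/-!
`υX` sits in `βX` as the intersection of the cozero sets of those `f ∈ C(βX)` that vanish
nowhere on `X`. A closed subset of `βX` is compact, hence realcompact, and cutting a realcompact
space `Y` down by a family `(f_i)_{i ∈ I}` of cozero sets keeps it realcompact, since
`y ↦ (y, (1 / f_i y)_i)` is a closed embedding into `Y × ℝ^I`. So `cl_{βX} A ∩ υX` is a
realcompact space containing `A` densely. A continuous `g : X → ℝ`, read as a map into
`(-1, 1) ≅ ℝ`, extends to `βX → [-1, 1]`, and the extension avoids `±1` on `υX` because `1 - |·|`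
of it vanishes nowhere on `X`; so `g` extends over `υX`. As `A` is C-embedded, every continuous
function on `A` is such a restriction.
-/

open Topology Set

namespace IsRealcompactSpace

variable {Y Z : Type} [TopologicalSpace Y] [TopologicalSpace Z]

lemma of_isClosedEmbedding (hZ : IsRealcompactSpace Z) {e : Y → Z} (he : IsClosedEmbedding e) :
    IsRealcompactSpace Y :=
  let ⟨ι, f, hf⟩ := hZ
  ⟨ι, f ∘ e, hf.comp he⟩

lemma pi_real (ι : Type) : IsRealcompactSpace (ι → ℝ) :=
  ⟨ι, id, .id⟩

lemma prod (hY : IsRealcompactSpace Y) (hZ : IsRealcompactSpace Z) :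
    IsRealcompactSpace (Y × Z) := by
  obtain ⟨_, _, hf⟩ := hY
  obtain ⟨_, _, hg⟩ := hZ
  exact (pi_real _).of_isClosedEmbedding
    (Homeomorph.sumArrowHomeomorphProdArrow.symm.isClosedEmbedding.comp (hf.prodMap hg))

lemma of_compactSpace [CompactSpace Y] [T2Space Y] : IsRealcompactSpace Y := by
  refine ⟨C(Y, ℝ), fun y f => f y, Continuous.isClosedEmbedding
    (continuous_pi fun f => f.continuous) fun y y' hyy' => ?_⟩
  by_contra hne
  obtain ⟨f, hf, hfy⟩ := separatesPoints_continuous_of_t35Space hne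
  exact hfy (congrFun hyy' ⟨f, hf⟩)

lemma inter_cozero {F : Set Y} (hF : IsRealcompactSpace F) {I : Type} (f : I → Y → ℝ)
    (hf : ∀ i, Continuous (f i)) : IsRealcompactSpace ↥(F ∩ {y | ∀ i, f i y ≠ 0}) := by
  set φ : ↥(F ∩ {y | ∀ i, f i y ≠ 0}) → F × (I → ℝ) :=
    fun p => (⟨p, p.2.1⟩, fun i => (f i p)⁻¹)
  have hφ : Continuous φ := by
    refine (continuous_inclusion inter_subset_left).prodMk (continuous_pi fun i => ?_)
    exact ((hf i).comp continuous_subtype_val).inv₀ fun p => p.2.2 i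
  have hrange : range φ = {q | ∀ i, f i q.1 * q.2 i = 1} := by
    ext ⟨y, w⟩
    constructor
    · rintro ⟨p, hp⟩
      cases hp
      exact fun i => mul_inv_cancel₀ (p.2.2 i)
    · intro hw
      have hy : ∀ i, f i y ≠ 0 := fun i h0 => by simpa [h0] using hw i
      refine ⟨⟨y, y.2, hy⟩, Prod.ext rfl (funext fun i => ?_)⟩
      exact (eq_inv_of_mul_eq_one_right (hw i)).symm
  refine (hF.prod (pi_real I)).of_isClosedEmbedding (e := φ) ⟨⟨?_, ?_⟩, ?_⟩
  · exact IsInducing.of_comp hφ continuous_fst (IsEmbedding.inclusion inter_subset_left).isInducing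
  · exact fun p p' h => Subtype.ext (congrArg (fun q => (q.1 : Y)) h)
  · rw [hrange, ofPred_forall]
    exact isClosed_iInter fun i => isClosed_eq
      (((hf i).comp (continuous_subtype_val.comp continuous_fst)).mul
        ((continuous_apply i).comp continuous_snd)) continuous_const

end IsRealcompactSpace

section Hewitt

variable {X : Type} [TopologicalSpace X]

lemma mem_hewitt_iff {p : StoneCech X} : p ∈ hewitt X ↔
    ∀ f : StoneCech X → ℝ, Continuous f → (∀ x, f (stoneCechUnit x) ≠ 0) → f p ≠ 0 := by
  simp only [hewitt, mem_sInter, range_subset_iff]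
  constructor
  · exact fun h f hf hX => h {y | f y ≠ 0} ⟨⟨f, hf, rfl⟩, hX⟩
  · rintro h C ⟨⟨f, hf, rfl⟩, hX⟩
    exact h f hf hX

lemma stoneCechUnit_mem_hewitt (x : X) : stoneCechUnit x ∈ hewitt X :=
  mem_hewitt_iff.2 fun _ _ hX => hX x

lemma hewitt_eq_setOf_forall_ne_zero : hewitt X =
    {p | ∀ f : {f : C(StoneCech X, ℝ) // ∀ x, f (stoneCechUnit x) ≠ 0}, f.1 p ≠ 0} := by
  ext p
  rw [mem_hewitt_iff]
  exact ⟨fun h f => h f.1 f.1.continuous f.2, fun h f hf hX => h ⟨⟨f, hf⟩, hX⟩⟩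

lemma isRealcompactSpace_inter_hewitt {F : Set (StoneCech X)} (hF : IsClosed F) :
    IsRealcompactSpace ↥(F ∩ hewitt X) := by
  have : CompactSpace F := isCompact_iff_compactSpace.1 hF.isCompact
  rw [hewitt_eq_setOf_forall_ne_zero]
  exact IsRealcompactSpace.of_compactSpace.inter_cozero
    (fun f : {f : C(StoneCech X, ℝ) // ∀ x, f (stoneCechUnit x) ≠ 0} => ⇑f.1) fun f => f.1.continuous

lemma exists_continuous_extension_to_hewitt {g : X → ℝ} (hg : Continuous g) :
    ∃ G : hewitt X → ℝ, Continuous G ∧ ∀ x, G ⟨stoneCechUnit x, stoneCechUnit_mem_hewitt x⟩ = g x := by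
  set h := orderIsoIooNegOneOne ℝ
  set q : X → Icc (-1 : ℝ) 1 := fun x => ⟨h (g x), Ioo_subset_Icc_self (h (g x)).2⟩
  have hq : Continuous q := (continuous_subtype_val.comp (h.continuous.comp hg)).subtype_mk _
  set Q : StoneCech X → ℝ := fun p => ((stoneCechExtend hq p : Icc (-1 : ℝ) 1) : ℝ)
  have hQ : Continuous Q := continuous_subtype_val.comp (continuous_stoneCechExtend hq)
  have hQX (x : X) : Q (stoneCechUnit x) = h (g x) :=
    congrArg Subtype.val (stoneCechExtend_stoneCechUnit hq x)
  have hQ_mem (p : hewitt X) : Q p ∈ Ioo (-1 : ℝ) 1 := by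
    have hne : 1 - |Q p| ≠ 0 := mem_hewitt_iff.1 p.2 (fun p => 1 - |Q p|)
      (continuous_const.sub hQ.abs) fun x => by
        rw [hQX]
        exact (sub_pos.2 (abs_lt.2 (h (g x)).2)).ne'
    have hle : |Q p| ≤ 1 := abs_le.2 (stoneCechExtend hq p).2
    exact abs_lt.1 (lt_of_le_of_ne hle fun h1 => hne (by rw [h1, sub_self]))
  refine ⟨fun p => h.symm ⟨Q p, hQ_mem p⟩,
    h.symm.continuous.comp ((hQ.comp continuous_subtype_val).subtype_mk _), fun x => ?_⟩
  rw [h.symm_apply_eq]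
  exact Subtype.ext (hQX x)

end Hewitt

lemma dense_preimage_val_of_subset_closure {Y : Type} [TopologicalSpace Y] {A S : Set Y}
    (hAS : A ⊆ S) (hS : S ⊆ closure A) : Dense ((↑) ⁻¹' A : Set S) := by
  rwa [Subtype.dense_iff, Subtype.image_preimage_coe, inter_eq_right.2 hAS]

theorem stmt11_general (X : Type) [TopologicalSpace X] (A : Set X)
    (hA : ∀ f : A → ℝ, Continuous f → ∃ g : X → ℝ, Continuous g ∧ ∀ a : A, g a = f a) :
    IsRealcompactSpace ↥(closure (stoneCechUnit '' A) ∩ hewitt X) ∧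
    Dense {p : ↥(closure (stoneCechUnit '' A) ∩ hewitt X) |
      (p : StoneCech X) ∈ stoneCechUnit '' A} ∧
    ∀ f : A → ℝ, Continuous f →
      ∃ g : ↥(closure (stoneCechUnit '' A) ∩ hewitt X) → ℝ, Continuous g ∧
        ∀ (a : A) (h : stoneCechUnit (a : X) ∈ closure (stoneCechUnit '' A) ∩ hewitt X),
          g ⟨stoneCechUnit (a : X), h⟩ = f a := by
  have hA_sub : stoneCechUnit '' A ⊆ closure (stoneCechUnit '' A) ∩ hewitt X := by
    rintro _ ⟨x, hx, rfl⟩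
    exact ⟨subset_closure (mem_image_of_mem _ hx), stoneCechUnit_mem_hewitt x⟩
  refine ⟨isRealcompactSpace_inter_hewitt isClosed_closure,
    dense_preimage_val_of_subset_closure hA_sub inter_subset_left, fun f hf => ?_⟩
  obtain ⟨g, hg, hgf⟩ := hA f hf
  obtain ⟨G, hG, hGg⟩ := exists_continuous_extension_to_hewitt hg
  exact ⟨fun p => G ⟨p, p.2.2⟩, hG.comp (continuous_inclusion inter_subset_right),
    fun a _ => (hGg a).trans (hgf a)⟩

/-- if `A ⊆ X` is C-embedded, then `cl_{υX} A = υA`: the closure of `A`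
in `υX` is a realcompact space in which `A` is dense and to which every continuous
real-valued function on `A` extends continuously. -/
theorem stmt11 (X : Type) [TopologicalSpace X] [T35Space X] (A : Set X)
    (hA : ∀ f : A → ℝ, Continuous f → ∃ g : X → ℝ, Continuous g ∧ ∀ a : A, g a = f a) :
    IsRealcompactSpace ↥(closure (stoneCechUnit '' A) ∩ hewitt X) ∧
    Dense {p : ↥(closure (stoneCechUnit '' A) ∩ hewitt X) |
      (p : StoneCech X) ∈ stoneCechUnit '' A} ∧
    ∀ f : A → ℝ, Continuous f →
      ∃ g : ↥(closure (stoneCechUnit '' A) ∩ hewitt X) → ℝ, Continuous g ∧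
        ∀ (a : A) (h : stoneCechUnit (a : X) ∈ closure (stoneCechUnit '' A) ∩ hewitt X),
          g ⟨stoneCechUnit (a : X), h⟩ = f a :=
  stmt11_general X A hA
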